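/- Let P1, P2 be probability measures supported on [0, M], and suppose P1 has a density f_{P1} with f_{P1}(x) ≥ b > 0 for all x ∈ [0, M]. Then sup_{t ∈ [0,1]} | q_{P1}(t) − q_{P2}(t) | ≤ (1/b) · sup_{x ∈ [0, M]} | F_{P1}(x) − F_{P2}(x) |. -/

import Mathlib

open MeasureTheory Real Set

/-- The `t`-quantile of a probability measure `P` on `ℝ`:
`q_P(t) = inf { x : t ≤ F_P(x) }`, where `F_P(x) = P(-∞, x]`. -/
noncomputable def quantile (P : Measure ℝ) (t : ℝ) : ℝ :=
  sInf {x : ℝ | t ≤ (P (Set.Iic x)).toReal}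

/-!
Let `ε` bound `|F_{P1} - F_{P2}|` on `[0, M]`. The density bound makes `F_{P1}` rise by at least
`b δ` over any `[x, x + δ] ⊆ [0, M]`. Starting from a quantile `q` of either law and moving right
by `δ = ε / b`, the CDF of the other law has therefore reached level `t` at `q + ε / b` (or
`q + ε / b` lies beyond `M`, where every quantile stops). Hence each quantile exceeds the other by
at most `ε / b`.
-/

open ProbabilityTheory

lemma toReal_measure_Iic (P : Measure ℝ) [IsProbabilityMeasure P] (x : ℝ) :
    (P (Iic x)).toReal = cdf P x :=
  (cdf_eq_real P x).symm

lemma quantile_eq_sInf_cdf (P : Measure ℝ) [IsProbabilityMeasure P] (t : ℝ) :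
    quantile P t = sInf {x | t ≤ cdf P x} := by
  simp only [quantile, toReal_measure_Iic]

lemma quantile_zero (P : Measure ℝ) : quantile P 0 = 0 := by
  simp [quantile]

section Quantile

variable {P : Measure ℝ} [IsProbabilityMeasure P] {a c t x : ℝ}

lemma le_cdf_quantile (h : ∃ x, t ≤ cdf P x) : t ≤ cdf P (quantile P t) := by
  rw [quantile_eq_sInf_cdf]
  refine ge_of_tendsto (((cdf P).right_continuous _).mono Ioi_subset_Ici_self).tendsto
    (eventually_nhdsWithin_of_forall fun y hy => ?_)
  obtain ⟨z, hz : t ≤ cdf P z, hzy⟩ := exists_lt_of_csInf_lt h hy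
  exact hz.trans (monotone_cdf P hzy.le)

lemma cdf_eq_zero_of_lt (hP : P (Icc a c)ᶜ = 0) (hx : x < a) : cdf P x = 0 := by
  rw [cdf_eq_real, measureReal_eq_zero_iff]
  refine measure_mono_null ?_ hP
  exact fun y (hy : y ≤ x) h => (h.1.trans hy).not_gt hx

lemma cdf_eq_one_of_le (hP : P (Icc a c)ᶜ = 0) (hx : c ≤ x) : cdf P x = 1 := by
  rw [cdf_eq_real, measureReal_def, (prob_compl_eq_zero_iff measurableSet_Iic).1,
    ENNReal.toReal_one]
  exact measure_mono_null
    (compl_subset_compl.2 (Icc_subset_Iic_self.trans (Iic_subset_Iic.2 hx))) hP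

lemma bddBelow_setOf_le_cdf (hP : P (Icc a c)ᶜ = 0) (ht : 0 < t) :
    BddBelow {x | t ≤ cdf P x} :=
  ⟨a, fun x (hx : t ≤ cdf P x) => not_lt.1 fun hxa => by linarith [cdf_eq_zero_of_lt hP hxa]⟩

lemma quantile_le_of_le_cdf (hP : P (Icc a c)ᶜ = 0) (ht : 0 < t) (hx : t ≤ cdf P x) :
    quantile P t ≤ x := by
  rw [quantile_eq_sInf_cdf]
  exact csInf_le (bddBelow_setOf_le_cdf hP ht) hx

lemma quantile_mem_Icc (hP : P (Icc a c)ᶜ = 0) (ht : t ∈ Ioc 0 1) : quantile P t ∈ Icc a c := by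
  have hc : t ≤ cdf P c := (cdf_eq_one_of_le hP le_rfl).symm ▸ ht.2
  refine ⟨not_lt.1 fun h => ?_, quantile_le_of_le_cdf hP ht.1 hc⟩
  have := le_cdf_quantile ⟨c, hc⟩
  rw [cdf_eq_zero_of_lt hP h] at this
  exact this.not_gt ht.1

lemma quantile_le_of_le_cdf_of_le (hP : P (Icc a c)ᶜ = 0) (ht : t ∈ Ioc 0 1)
    (hx : x ≤ c → t ≤ cdf P x) : quantile P t ≤ x := by
  rcases le_or_gt x c with hxc | hcx
  · exact quantile_le_of_le_cdf hP ht.1 (hx hxc)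
  · exact (quantile_mem_Icc hP ht).2.trans hcx.le

end Quantile

lemma measure_compl_eq_zero_of_density {P : Measure ℝ} {f : ℝ → ℝ} {s : Set ℝ}
    (hP : P = volume.withDensity (fun y => ENNReal.ofReal (f y))) (hs : MeasurableSet s)
    (hf : ∀ y ∉ s, f y = 0) : P sᶜ = 0 := by
  rw [hP, withDensity_apply _ hs.compl]
  exact (setLIntegral_congr_fun (g := fun _ => 0) hs.compl fun y hy => by simp [hf y hy]).trans
    lintegral_zero

lemma cdf_add_mul_le_of_le_density {P : Measure ℝ} [IsProbabilityMeasure P] {f : ℝ → ℝ}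
    (hP : P = volume.withDensity (fun y => ENNReal.ofReal (f y))) {b x y : ℝ} (hxy : x ≤ y)
    (hf : ∀ z ∈ Ioc x y, b ≤ f z) : cdf P x + b * (y - x) ≤ cdf P y := by
  have hmass : ENNReal.ofReal (b * (y - x)) ≤ ENNReal.ofReal (cdf P y - cdf P x) := by
    rw [← StieltjesFunction.measure_Ioc, measure_cdf, hP, withDensity_apply _ measurableSet_Ioc,
      ENNReal.ofReal_mul' (sub_nonneg.2 hxy), ← Real.volume_Ioc, ← setLIntegral_const]
    exact setLIntegral_mono' measurableSet_Ioc fun z hz => ENNReal.ofReal_le_ofReal (hf z hz)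
  have := (ENNReal.ofReal_le_ofReal_iff (sub_nonneg.2 (monotone_cdf P hxy))).1 hmass
  linarith

theorem abs_quantile_sub_quantile_le {P Q : Measure ℝ} [IsProbabilityMeasure P]
    [IsProbabilityMeasure Q] {a c b ε t : ℝ} (hP : P (Icc a c)ᶜ = 0) (hQ : Q (Icc a c)ᶜ = 0)
    (hb : 0 < b) (hslope : ∀ x y, a ≤ x → x ≤ y → y ≤ c → cdf P x + b * (y - x) ≤ cdf P y)
    (hclose : ∀ x ∈ Icc a c, |cdf P x - cdf Q x| ≤ ε) (ht : t ∈ Ioc 0 1) :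
    |quantile P t - quantile Q t| ≤ ε / b := by
  have hε : 0 ≤ ε / b :=
    div_nonneg ((abs_nonneg _).trans (hclose _ (quantile_mem_Icc hP ht))) hb.le
  have hgap : b * (ε / b) = ε := mul_div_cancel₀ ε hb.ne'
  have hPQ : quantile P t ≤ quantile Q t + ε / b := by
    set q := quantile Q t
    have hq := quantile_mem_Icc hQ ht
    refine quantile_le_of_le_cdf_of_le hP ht fun hqc => ?_
    calc t ≤ cdf Q q := le_cdf_quantile ⟨c, (cdf_eq_one_of_le hQ le_rfl).symm ▸ ht.2⟩
      _ ≤ cdf P q + b * (q + ε / b - q) := by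
        rw [add_sub_cancel_left, hgap]; linarith [(abs_le.1 (hclose q hq)).1]
      _ ≤ cdf P (q + ε / b) := hslope _ _ hq.1 (le_add_of_nonneg_right hε) hqc
  have hQP : quantile Q t ≤ quantile P t + ε / b := by
    set q := quantile P t
    have hq := quantile_mem_Icc hP ht
    refine quantile_le_of_le_cdf_of_le hQ ht fun hqc => ?_
    have hy : q + ε / b ∈ Icc a c := ⟨hq.1.trans (le_add_of_nonneg_right hε), hqc⟩
    calc t ≤ cdf P q := le_cdf_quantile ⟨c, (cdf_eq_one_of_le hP le_rfl).symm ▸ ht.2⟩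
      _ = cdf P q + b * (q + ε / b - q) - ε := by rw [add_sub_cancel_left, hgap]; ring
      _ ≤ cdf P (q + ε / b) - ε := by
        linarith [hslope _ _ hq.1 (le_add_of_nonneg_right hε) hqc]
      _ ≤ cdf Q (q + ε / b) := by linarith [(abs_le.1 (hclose _ hy)).2]
  exact abs_sub_le_iff.2 ⟨by linarith, by linarith⟩

theorem stmt10_general (P1 P2 : Measure ℝ) [IsProbabilityMeasure P1] [IsProbabilityMeasure P2]
    (M b : ℝ) (hb : 0 < b) (f : ℝ → ℝ)
    (hf0 : ∀ y : ℝ, y ∉ Set.Icc 0 M → f y = 0)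
    (hfb : ∀ y ∈ Set.Icc (0 : ℝ) M, b ≤ f y)
    (hP1 : P1 = MeasureTheory.volume.withDensity (fun y => ENNReal.ofReal (f y)))
    (hP2supp : P2 (Set.Icc (0 : ℝ) M)ᶜ = 0) :
    ∀ t ∈ Set.Icc (0 : ℝ) 1,
      |quantile P1 t - quantile P2 t| ≤
        (1 / b) * sSup ((fun x : ℝ =>
          |(P1 (Set.Iic x)).toReal - (P2 (Set.Iic x)).toReal|) '' Set.Icc 0 M) := by
  simp only [toReal_measure_Iic]
  intro t ht
  rcases ht.1.eq_or_lt with rfl | ht0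
  · rw [quantile_zero, quantile_zero, sub_zero, abs_zero]
    exact mul_nonneg (by positivity) (Real.sSup_nonneg (by rintro _ ⟨x, -, rfl⟩; positivity))
  have hbdd : BddAbove ((fun x => |cdf P1 x - cdf P2 x|) '' Icc 0 M) :=
    ⟨1, by
      rintro _ ⟨x, -, rfl⟩
      exact abs_sub_le_of_nonneg_of_le (cdf_nonneg P1 x) (cdf_le_one P1 x) (cdf_nonneg P2 x)
        (cdf_le_one P2 x)⟩
  have hslope : ∀ x y, 0 ≤ x → x ≤ y → y ≤ M → cdf P1 x + b * (y - x) ≤ cdf P1 y :=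
    fun x y hx hxy hy => cdf_add_mul_le_of_le_density hP1 hxy
      fun z hz => hfb z ⟨hx.trans hz.1.le, hz.2.trans hy⟩
  rw [one_div_mul_eq_div]
  exact abs_quantile_sub_quantile_le (measure_compl_eq_zero_of_density hP1 measurableSet_Icc hf0)
    hP2supp hb hslope (fun x hx => le_csSup hbdd ⟨x, hx, rfl⟩) ⟨ht0, ht.2⟩

/-- **Quantile comparison via CDFs.** If `P1, P2` are supported on `[0, M]` and `P1` has a
density bounded below by `b > 0` on `[0, M]`, then
`sup_{t∈[0,1]} |q_{P1}(t) − q_{P2}(t)| ≤ (1/b) sup_{x∈[0,M]} |F_{P1}(x) − F_{P2}(x)|`. -/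
theorem stmt10 (P1 P2 : Measure ℝ) [IsProbabilityMeasure P1] [IsProbabilityMeasure P2]
    (M b : ℝ) (hb : 0 < b) (f : ℝ → ℝ) (hfmeas : Measurable f)
    (hf0 : ∀ y : ℝ, y ∉ Set.Icc 0 M → f y = 0)
    (hfb : ∀ y ∈ Set.Icc (0 : ℝ) M, b ≤ f y)
    (hP1 : P1 = MeasureTheory.volume.withDensity (fun y => ENNReal.ofReal (f y)))
    (hP2supp : P2 (Set.Icc (0 : ℝ) M)ᶜ = 0) :
    ∀ t ∈ Set.Icc (0 : ℝ) 1,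
      |quantile P1 t - quantile P2 t| ≤
        (1 / b) * sSup ((fun x : ℝ =>
          |(P1 (Set.Iic x)).toReal - (P2 (Set.Iic x)).toReal|) '' Set.Icc 0 M) :=
  stmt10_general P1 P2 M b hb f hf0 hfb hP1 hP2supp
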